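/- arXiv:2105.07080 — 2 statements merged into one kernel-verified Lean document; each statement's English description precedes it below -/
import Mathlib

section
/- KKT characterization of the optimizer with sparsity and box constraints: suppose Δ_opt maximizes ⟨Δ, M⟩ over ℋ ∩ B_ε and is not fully saturated, with m_{ij} ≠ 0 at some unsaturated entry. Then there exists θ ≥ 0 such that for each (i,j) ∈ E_p, either (Δ_opt)_{ij} = m_{ij}·θ (when m_{ij}θ ∈ (lo_{ij}, hi_{ij})), or (Δ_opt)_{ij} = hi_{ij} (when m_{ij}θ ≥ hi_{ij}), or (Δ_opt)_{ij} = lo_{ij} (when m_{ij}θ ≤ lo_{ij}); and (Δ_opt)_{ij} = 0 for (i,j) ∉ E_p. -/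
/-!
Only two entries of the optimizer are ever perturbed: a pivot entry `a`, strictly inside its
box with `M a ≠ 0`, and an arbitrary other entry `b`. Moving `(Δ a, Δ b)` along
`t ↦ (1 - t²) • (Δ a, Δ b) + t • (-Δ b, Δ a)` keeps the Frobenius norm from growing and
changes the objective at first order by `t (M b · Δ a - M a · Δ b)`. Whenever the entry `b`
stays inside its box for small `t` of one sign, optimality fixes the sign of this quantity,
giving `M b · θ ≤ Δ b` unless `Δ b` is at its upper bound and `Δ b ≤ M b · θ` unless it is
at its lower bound, with `θ = Δ a / M a`; shrinking the pivot entry to `0` shows `θ ≥ 0`.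
If `Δ a = 0`, both directions are admissible and every entry vanishes, so `θ = 0` works.
-/

open scoped BigOperators

/-- Frobenius norm of a real matrix. -/
noncomputable def frobNormR {n : ℕ} (A : Matrix (Fin n) (Fin n) ℝ) : ℝ :=
  Real.sqrt (∑ i, ∑ j, (A i j) ^ 2)

/-- Membership in the structured constraint set
`ℋ = {Δ : Δ_{ij} = 0 for (i,j) ∉ E_p, Δ_{ij} ∈ [lo_{ij}, hi_{ij}] for (i,j) ∈ E_p}`. -/
def memH {n : ℕ} (Ep : Set (Fin n × Fin n)) (lo hi : Fin n → Fin n → ℝ)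
    (Δ : Matrix (Fin n) (Fin n) ℝ) : Prop :=
  (∀ i j, (i, j) ∉ Ep → Δ i j = 0) ∧
  (∀ i j, (i, j) ∈ Ep → lo i j ≤ Δ i j ∧ Δ i j ≤ hi i j)

open Set Filter Topology Function

section PairProblem

def IsPairMax (m p la ha lb hb x y : ℝ) : Prop :=
  ∀ u ∈ Icc la ha, ∀ v ∈ Icc lb hb, u ^ 2 + v ^ 2 ≤ x ^ 2 + y ^ 2 → u * m + v * p ≤ x * m + y * p

variable {m p la ha lb hb x y : ℝ}

theorem IsPairMax.neg_fst (h : IsPairMax m p la ha lb hb x y) :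
    IsPairMax (-m) p (-ha) (-la) lb hb (-x) y := by
  intro u hu v hv huv
  have := h (-u) ⟨by linarith [hu.2], by linarith [hu.1]⟩ v hv (by linarith)
  linarith

theorem IsPairMax.neg_snd (h : IsPairMax m p la ha lb hb x y) :
    IsPairMax m (-p) la ha (-hb) (-lb) x (-y) := by
  intro u hu v hv huv
  have := h u hu (-v) ⟨by linarith [hv.2], by linarith [hv.1]⟩ (by linarith)
  linarith

/-- Along the curve `t ↦ (1 - t²) • (x, y) + t • (-y, x)`, which stays in the disc for
`t ≤ 1`, the objective grows at rate `p * x - m * y`. -/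
theorem IsPairMax.rotate (h : IsPairMax m p la ha lb hb x y) (hx : x ∈ Ioo la ha)
    (hv : ∀ᶠ t in 𝓝[>] 0, (1 - t ^ 2) * y + t * x ∈ Icc lb hb) :
    p * x - m * y ≤ 0 := by
  by_contra! hc
  have hnear : ∀ᶠ t in 𝓝 (0 : ℝ), t < 1 ∧ t * (x * m + y * p) < p * x - m * y ∧
      la < (1 - t ^ 2) * x - t * y ∧ (1 - t ^ 2) * x - t * y < ha := by
    refine ContinuousAt.eventually_lt (by fun_prop) (by fun_prop) (by norm_num)
      |>.and <| ContinuousAt.eventually_lt (by fun_prop) (by fun_prop) (by simpa using hc)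
      |>.and <| ContinuousAt.eventually_lt (by fun_prop) (by fun_prop) (by simpa using hx.1)
      |>.and <| ContinuousAt.eventually_lt (by fun_prop) (by fun_prop) (by simpa using hx.2)
  obtain ⟨t, ⟨ht1, hslope, hu1, hu2⟩, hvt, (ht0 : 0 < t)⟩ :=
    ((hnear.filter_mono nhdsWithin_le_nhds).and (hv.and self_mem_nhdsWithin)).exists
  have hnorm : ((1 - t ^ 2) * x - t * y) ^ 2 + ((1 - t ^ 2) * y + t * x) ^ 2
      ≤ x ^ 2 + y ^ 2 := by
    have : t ^ 4 ≤ t ^ 2 := pow_le_pow_of_le_one ht0.le ht1.le (by norm_num)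
    nlinarith [sq_nonneg x, sq_nonneg y]
  have := h _ ⟨hu1.le, hu2.le⟩ _ hvt hnorm
  nlinarith

theorem eventually_mem_Icc_of_pos {c : ℝ} (hc : 0 < c) (hy : y ∈ Ico lb hb) :
    ∀ᶠ t in 𝓝[>] 0, (1 - t ^ 2) * y + t * c ∈ Icc lb hb := by
  have hnear : ∀ᶠ t in 𝓝 (0 : ℝ), 0 < c - t * y ∧ (1 - t ^ 2) * y + t * c < hb :=
    ContinuousAt.eventually_lt (by fun_prop) (by fun_prop) (by simpa using hc)
      |>.and <| ContinuousAt.eventually_lt (by fun_prop) (by fun_prop) (by simpa using hy.2)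
  filter_upwards [hnear.filter_mono nhdsWithin_le_nhds, self_mem_nhdsWithin]
    with t ⟨hpos, hlt⟩ (ht : 0 < t)
  exact ⟨by nlinarith [hy.1], hlt.le⟩

theorem eventually_mem_Icc_of_zero (hy : y ∈ Icc lb hb) (hlb : lb ≤ 0) (hhb : 0 ≤ hb) :
    ∀ᶠ t in 𝓝[>] 0, (1 - t ^ 2) * y + t * 0 ∈ Icc lb hb := by
  have hnear : ∀ᶠ t in 𝓝 (0 : ℝ), t < 1 := eventually_lt_nhds one_pos
  filter_upwards [hnear.filter_mono nhdsWithin_le_nhds, self_mem_nhdsWithin]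
    with t ht1 (ht0 : 0 < t)
  have : 0 ≤ 1 - t ^ 2 := by nlinarith
  constructor <;> nlinarith [hy.1, hy.2]

theorem IsPairMax.mul_div_le (h : IsPairMax m p la ha lb hb x y) (hx : x ∈ Ioo la ha)
    (hxm : 0 < x * m) (hy : y ∈ Ico lb hb) : p * (x / m) ≤ y := by
  wlog hx0 : 0 < x generalizing x m la ha
  · have := this h.neg_fst ⟨by linarith [hx.2], by linarith [hx.1]⟩ (by linarith)
      (by linarith [lt_of_le_of_ne (not_lt.1 hx0) (by rintro rfl; simp at hxm)])
    rwa [neg_div_neg_eq] at this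
  have hm : 0 < m := pos_of_mul_pos_right hxm hx0.le
  have := h.rotate hx (eventually_mem_Icc_of_pos hx0 hy)
  rw [mul_div_assoc', div_le_iff₀ hm]
  linarith

theorem IsPairMax.le_mul_div (h : IsPairMax m p la ha lb hb x y) (hx : x ∈ Ioo la ha)
    (hxm : 0 < x * m) (hy : y ∈ Ioc lb hb) : y ≤ p * (x / m) := by
  have := h.neg_snd.mul_div_le hx hxm ⟨by linarith [hy.2], by linarith [hy.1]⟩
  linarith

theorem IsPairMax.eq_zero_of_fst_eq_zero (h : IsPairMax m p la ha lb hb 0 y)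
    (hx : (0 : ℝ) ∈ Ioo la ha) (hm : m ≠ 0) (hy : y ∈ Icc lb hb) (hlb : lb ≤ 0) (hhb : 0 ≤ hb) :
    y = 0 := by
  have h₁ := h.rotate hx (eventually_mem_Icc_of_zero hy hlb hhb)
  have hy' : -y ∈ Icc (-hb) (-lb) := ⟨by linarith [hy.2], by linarith [hy.1]⟩
  have h₂ := h.neg_snd.rotate hx (eventually_mem_Icc_of_zero hy' (by linarith) (by linarith))
  have : m * y = 0 := by linarith
  exact (mul_eq_zero.1 this).resolve_left hm

end PairProblem

theorem box_cases_of_slackness {y c lo hi : ℝ} (hy : y ∈ Icc lo hi) (hup : y < hi → c ≤ y)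
    (hdown : lo < y → y ≤ c) :
    (lo < c ∧ c < hi → y = c) ∧ (hi ≤ c → y = hi) ∧ (c ≤ lo → y = lo) := by
  refine ⟨fun ⟨hlc, hch⟩ => ?_, fun hhc => ?_, fun hcl => ?_⟩
  · have hyh : y < hi := hy.2.lt_of_ne fun hyh => by linarith [hdown (by linarith)]
    exact le_antisymm (hdown (by linarith [hup hyh])) (hup hyh)
  · by_contra hne
    have hyh := hy.2.lt_of_ne hne
    linarith [hup hyh]
  · by_contra hne
    have hly := hy.1.lt_of_ne' hne
    linarith [hdown hly]

section BoxBall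

variable {ι : Type*} [Fintype ι] [DecidableEq ι]

theorem sum_apply_update (g : ι → ℝ → ℝ) (y : ι → ℝ) (a : ι) (c : ℝ) :
    ∑ q, g q (update y a c q) = ∑ q, g q (y q) + (g a c - g a (y a)) := by
  have hrest : ∑ q ∈ {a}ᶜ, g q (update y a c q) = ∑ q ∈ {a}ᶜ, g q (y q) :=
    Finset.sum_congr rfl fun q hq => by
      rw [update_of_ne (by simpa using hq)]
  rw [Fintype.sum_eq_add_sum_compl a, Fintype.sum_eq_add_sum_compl a (fun q => g q (y q)),
    hrest, update_self]
  ring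

variable {S : Set (ι → ℝ)} {E : Set ι} {lo hi w x : ι → ℝ}

theorem update_mul_le_of_isMaxOn
    (hS : ∀ y ∈ S, ∀ q ∈ E, ∀ c ∈ Icc (lo q) (hi q), update y q c ∈ S) (hxS : x ∈ S)
    (hmax : IsMaxOn (fun y => ∑ q, y q * w q) {y ∈ S | ∑ q, y q ^ 2 ≤ ∑ q, x q ^ 2} x)
    {a : ι} (ha : a ∈ E) {c : ℝ} (hc : c ∈ Icc (lo a) (hi a)) (hca : c ^ 2 ≤ x a ^ 2) :
    c * w a ≤ x a * w a := by
  have := isMaxOn_iff.1 hmax (update x a c) ⟨hS x hxS a ha c hc, by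
    rw [sum_apply_update (fun _ t => t ^ 2)]; linarith⟩
  simp only [sum_apply_update (fun q t => t * w q)] at this
  linarith

theorem isPairMax_of_isMaxOn
    (hS : ∀ y ∈ S, ∀ q ∈ E, ∀ c ∈ Icc (lo q) (hi q), update y q c ∈ S) (hxS : x ∈ S)
    (hmax : IsMaxOn (fun y => ∑ q, y q * w q) {y ∈ S | ∑ q, y q ^ 2 ≤ ∑ q, x q ^ 2} x)
    {a b : ι} (ha : a ∈ E) (hb : b ∈ E) (hba : b ≠ a) :
    IsPairMax (w a) (w b) (lo a) (hi a) (lo b) (hi b) (x a) (x b) := by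
  intro u hu v hv huv
  have hxa : update x a u b = x b := update_of_ne hba _ _
  have hsum (g : ι → ℝ → ℝ) : ∑ q, g q (update (update x a u) b v q)
      = ∑ q, g q (x q) + (g a u - g a (x a)) + (g b v - g b (x b)) := by
    rw [sum_apply_update, sum_apply_update, hxa]
  have := isMaxOn_iff.1 hmax (update (update x a u) b v)
    ⟨hS _ (hS x hxS a ha u hu) b hb v hv, by rw [hsum (fun _ t => t ^ 2)]; linarith⟩
  simp only [hsum (fun q t => t * w q)] at this
  linarith

theorem exists_multiplier_of_isMaxOn
    (hS : ∀ y ∈ S, ∀ q ∈ E, ∀ c ∈ Icc (lo q) (hi q), update y q c ∈ S) (hxS : x ∈ S)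
    (hmax : IsMaxOn (fun y => ∑ q, y q * w q) {y ∈ S | ∑ q, y q ^ 2 ≤ ∑ q, x q ^ 2} x)
    (hbox : ∀ q ∈ E, lo q ≤ 0 ∧ 0 ≤ hi q) (hx : ∀ q ∈ E, x q ∈ Icc (lo q) (hi q))
    {a : ι} (ha : a ∈ E) (hxa : x a ∈ Ioo (lo a) (hi a)) (hwa : w a ≠ 0) :
    ∃ θ, 0 ≤ θ ∧ ∀ q ∈ E, (x q < hi q → w q * θ ≤ x q) ∧ (lo q < x q → x q ≤ w q * θ) := by
  have hpair {q} (hq : q ∈ E) (hqa : q ≠ a) := isPairMax_of_isMaxOn hS hxS hmax ha hq hqa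
  have hxw : 0 ≤ x a * w a := by
    simpa using update_mul_le_of_isMaxOn hS hxS hmax ha (c := 0) (hbox a ha)
      (by simpa using sq_nonneg (x a))
  by_cases hx0 : x a = 0
  · have hzero : ∀ q ∈ E, x q = 0 := fun q hq => by
      obtain rfl | hqa := eq_or_ne q a
      · exact hx0
      · rw [hx0] at hxa hpair
        exact (hpair hq hqa).eq_zero_of_fst_eq_zero hxa hwa (hx q hq) (hbox q hq).1 (hbox q hq).2
    refine ⟨0, le_rfl, fun q hq => ?_⟩
    simp [hzero q hq]
  · have hxw : 0 < x a * w a := hxw.lt_of_ne' (mul_ne_zero hx0 hwa)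
    refine ⟨x a / w a, ?_, fun q hq => ?_⟩
    · rw [← mul_div_mul_right _ _ hwa]
      exact div_nonneg hxw.le (mul_self_nonneg _)
    obtain rfl | hqa := eq_or_ne q a
    · rw [mul_div_cancel₀ _ hwa]
      exact ⟨fun _ => le_rfl, fun _ => le_rfl⟩
    · exact ⟨fun h => (hpair hq hqa).mul_div_le hxa hxw ⟨(hx q hq).1, h⟩,
        fun h => (hpair hq hqa).le_mul_div hxa hxw ⟨h, (hx q hq).2⟩⟩

end BoxBall

theorem memH_curry_update {n : ℕ} {Ep : Set (Fin n × Fin n)} {lo hi : Fin n → Fin n → ℝ}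
    {y : Fin n × Fin n → ℝ} (hy : memH Ep lo hi (Matrix.of (curry y))) {q : Fin n × Fin n}
    (hq : q ∈ Ep) {c : ℝ} (hc : c ∈ Icc (lo q.1 q.2) (hi q.1 q.2)) :
    memH Ep lo hi (Matrix.of (curry (update y q c))) := by
  constructor <;> intro i j hij <;> obtain rfl | hne := eq_or_ne (i, j) q
  · exact absurd hq hij
  · simpa [update_of_ne hne] using hy.1 i j hij
  · simpa using hc
  · simpa [update_of_ne hne] using hy.2 i j hij

theorem kkt_characterization_general {n : ℕ} (Ep : Set (Fin n × Fin n)) (lo hi : Fin n → Fin n → ℝ)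
    (hbox : ∀ i j, (i, j) ∈ Ep → lo i j ≤ 0 ∧ 0 ≤ hi i j)
    (ε : ℝ) (M : Matrix (Fin n) (Fin n) ℝ)
    (Δopt : Matrix (Fin n) (Fin n) ℝ)
    (hmem : memH Ep lo hi Δopt) (hball : frobNormR Δopt ≤ ε)
    (hmax : ∀ Δ, memH Ep lo hi Δ → frobNormR Δ ≤ ε →
      ∑ i, ∑ j, Δ i j * M i j ≤ ∑ i, ∑ j, Δopt i j * M i j)
    (hns : ∃ i j, (i, j) ∈ Ep ∧ lo i j < Δopt i j ∧ Δopt i j < hi i j ∧ M i j ≠ 0) :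
    ∃ θ : ℝ, 0 ≤ θ ∧
      (∀ i j, (i, j) ∉ Ep → Δopt i j = 0) ∧
      (∀ i j, (i, j) ∈ Ep →
        ((lo i j < M i j * θ ∧ M i j * θ < hi i j → Δopt i j = M i j * θ) ∧
         (hi i j ≤ M i j * θ → Δopt i j = hi i j) ∧
         (M i j * θ ≤ lo i j → Δopt i j = lo i j))) := by
  obtain ⟨i₀, j₀, hE, hlo, hhi, hM⟩ := hns
  have hmax' : IsMaxOn (fun y => ∑ q, y q * uncurry M q)
      {y | memH Ep lo hi (Matrix.of (curry y)) ∧ ∑ q, y q ^ 2 ≤ ∑ q, uncurry Δopt q ^ 2}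
      (uncurry Δopt) := by
    refine isMaxOn_iff.2 fun y ⟨hyH, hy⟩ => ?_
    have hnorm : frobNormR (Matrix.of (curry y)) ≤ ε := by
      refine le_trans (Real.sqrt_le_sqrt ?_) hball
      rw [← Fintype.sum_prod_type', ← Fintype.sum_prod_type']
      exact hy
    have := hmax _ hyH hnorm
    rw [← Fintype.sum_prod_type', ← Fintype.sum_prod_type'] at this
    exact this
  obtain ⟨θ, hθ, hslack⟩ := exists_multiplier_of_isMaxOn
    (S := {y | memH Ep lo hi (Matrix.of (curry y))}) (E := Ep) (lo := uncurry lo)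
    (hi := uncurry hi) (fun _ hy _ hq _ hc => memH_curry_update hy hq hc) hmem hmax'
    (fun q hq => hbox q.1 q.2 hq) (fun q hq => hmem.2 q.1 q.2 hq) hE ⟨hlo, hhi⟩ hM
  exact ⟨θ, hθ, hmem.1, fun i j hij =>
    box_cases_of_slackness (hmem.2 i j hij) (hslack (i, j) hij).1 (hslack (i, j) hij).2⟩

/-- KKT characterization of the optimizer with sparsity and box
constraints: there is `θ ≥ 0` such that each entry of `Δopt` on `E_p` is either
proportional to `m_{ij}` (with ratio `θ`, when `m_{ij}θ` lies strictly inside the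
box) or saturated at the corresponding bound, and vanishes off `E_p`. -/
theorem kkt_characterization {n : ℕ} (Ep : Set (Fin n × Fin n)) (lo hi : Fin n → Fin n → ℝ)
    (hbox : ∀ i j, (i, j) ∈ Ep → lo i j ≤ 0 ∧ 0 ≤ hi i j)
    (ε : ℝ) (hε : 0 < ε) (M : Matrix (Fin n) (Fin n) ℝ)
    (Δopt : Matrix (Fin n) (Fin n) ℝ)
    (hmem : memH Ep lo hi Δopt) (hball : frobNormR Δopt ≤ ε)
    (hmax : ∀ Δ, memH Ep lo hi Δ → frobNormR Δ ≤ ε →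
      ∑ i, ∑ j, Δ i j * M i j ≤ ∑ i, ∑ j, Δopt i j * M i j)
    (hns : ∃ i j, (i, j) ∈ Ep ∧ lo i j < Δopt i j ∧ Δopt i j < hi i j ∧ M i j ≠ 0) :
    ∃ θ : ℝ, 0 ≤ θ ∧
      (∀ i j, (i, j) ∉ Ep → Δopt i j = 0) ∧
      (∀ i j, (i, j) ∈ Ep →
        ((lo i j < M i j * θ ∧ M i j * θ < hi i j → Δopt i j = M i j * θ) ∧
         (hi i j ≤ M i j * θ → Δopt i j = hi i j) ∧
         (M i j * θ ≤ lo i j → Δopt i j = lo i j))) :=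
  kkt_characterization_general Ep lo hi hbox ε M Δopt hmem hball hmax hns
end

section
/- Local Lipschitz dependence of the optimizer on the objective matrix: let Δ_opt and Δ̃_opt be maximizers of ⟨Δ, M⟩ and ⟨Δ, M̃⟩ respectively over ℋ ∩ B_ε, with M, M̃ ∈ ℝ^{n×n} of Frobenius norm at most 1, and suppose the non-saturation assumption holds for (Δ_opt, M). Then there exist δ, c > 0 such that ‖Δ̃_opt − Δ_opt‖_F ≤ c·ε·‖M̃ − M‖_F whenever ‖M̃ − M‖_F ≤ δ. -/
open scoped BigOperators

/-!
The ball is uniformly convex: if `x, y ∈ B_ε` are at distance `D`, then the ball of radius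
`D² / (8ε)` around their midpoint still lies in `B_ε`. Non-saturation gives a direction `w` with
`⟨w, M⟩ > 0` along which `Δopt` can move inside `ℋ`, so the midpoint of any feasible `Δ` and
`Δopt`, pushed along `w` by an amount of order `D²`, is feasible; maximality of `Δopt` then yields
the quadratic growth `⟨Δopt - Δ, M⟩ ≥ κ ‖Δ - Δopt‖²`. Adding the optimality of `Δ̃opt` for `M̃`
gives `κ ‖Δ̃opt - Δopt‖² ≤ ⟨Δ̃opt - Δopt, M̃ - M⟩ ≤ ‖Δ̃opt - Δopt‖ ‖M̃ - M‖`.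
-/

open scoped RealInnerProductSpace
open Metric

section QuadraticGrowth

variable {E : Type*} [NormedAddCommGroup E] [InnerProductSpace ℝ E]

theorem norm_midpoint_add_le {ε : ℝ} (hε : 0 < ε) {x y z : E} (hx : ‖x‖ ≤ ε) (hy : ‖y‖ ≤ ε)
    (hz : ‖z‖ ≤ ‖x - y‖ ^ 2 / (8 * ε)) : ‖midpoint ℝ x y + z‖ ≤ ε := by
  set s := ‖x - y‖ ^ 2 / (8 * ε)
  have hs : ‖x - y‖ ^ 2 = 8 * ε * s := by simp only [s]; field_simp
  have hxy : ‖x - y‖ ≤ 2 * ε := (norm_sub_le x y).trans (by linarith)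
  have hmid : ‖midpoint ℝ x y‖ ^ 2 ≤ ε ^ 2 - ‖x - y‖ ^ 2 / 4 := by
    have hpar := parallelogram_law_with_norm ℝ x y
    rw [midpoint_eq_smul_add, norm_smul, invOf_eq_inv, mul_pow, norm_inv, Real.norm_two]
    nlinarith [norm_nonneg x, norm_nonneg y]
  have hsε : s ≤ ε / 2 := by nlinarith [norm_nonneg (x - y)]
  have hmid' : ‖midpoint ℝ x y‖ ≤ ε - s := by
    refine abs_le_of_sq_le_sq' ?_ (by linarith) |>.2
    nlinarith
  calc ‖midpoint ℝ x y + z‖ ≤ ‖midpoint ℝ x y‖ + ‖z‖ := norm_add_le _ _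
    _ ≤ ε := by linarith

theorem exists_quadratic_growth_of_isMaxOn {C : Set E} (hC : Convex ℝ C) {ε : ℝ} (hε : 0 < ε)
    {m x₀ w : E} (hx₀ : x₀ ∈ C ∩ closedBall 0 ε)
    (hmax : IsMaxOn (fun x => ⟪x, m⟫) (C ∩ closedBall 0 ε) x₀)
    (hw : x₀ + w ∈ C) (hwm : 0 < ⟪w, m⟫) :
    ∃ κ > 0, ∀ x ∈ C ∩ closedBall 0 ε, κ * ‖x - x₀‖ ^ 2 ≤ ⟪x₀ - x, m⟫ := by
  have hR : 0 < 8 * ε * (‖w‖ + ε) := by positivity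
  refine ⟨2 * ⟪w, m⟫ / (8 * ε * (‖w‖ + ε)), by positivity, fun x hx => ?_⟩
  obtain ⟨hx₀C, hx₀B⟩ := hx₀
  obtain ⟨hxC, hxB⟩ := hx
  rw [mem_closedBall_zero_iff] at hx₀B hxB
  -- `t` is small enough that `x₀ + (2 * t) • w` stays on the segment `[x₀, x₀ + w]`
  -- and that `‖t • w‖ ≤ ‖x - x₀‖ ^ 2 / (8 * ε)`.
  set t := ‖x - x₀‖ ^ 2 / (8 * ε * (‖w‖ + ε))
  have hxx₀ : ‖x - x₀‖ ≤ 2 * ε := (norm_sub_le x x₀).trans (by linarith)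
  have ht₀ : 0 ≤ t := by positivity
  have ht₁ : 2 * t ≤ 1 := by
    rw [← mul_div_assoc, div_le_one hR]
    nlinarith [norm_nonneg w, norm_nonneg (x - x₀)]
  have hpC : midpoint ℝ x x₀ + t • w ∈ C := by
    have h := hC hxC (hC.add_smul_mem hx₀C hw ⟨by positivity, ht₁⟩)
      (by norm_num : (0 : ℝ) ≤ 1 / 2) (by norm_num : (0 : ℝ) ≤ 1 / 2) (by norm_num)
    convert h using 1
    rw [midpoint_eq_smul_add, invOf_eq_inv]
    module
  have hpB : ‖midpoint ℝ x x₀ + t • w‖ ≤ ε := by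
    refine norm_midpoint_add_le hε hxB hx₀B ?_
    rw [norm_smul, Real.norm_of_nonneg ht₀, div_mul_eq_mul_div, div_le_div_iff₀ hR (by positivity)]
    nlinarith [mul_nonneg (sq_nonneg ‖x - x₀‖) (sq_nonneg ε)]
  have h : ⟪midpoint ℝ x x₀ + t • w, m⟫ ≤ ⟪x₀, m⟫ := hmax ⟨hpC, mem_closedBall_zero_iff.2 hpB⟩
  rw [midpoint_eq_smul_add, invOf_eq_inv, inner_add_left, real_inner_smul_left,
    real_inner_smul_left, inner_add_left] at h
  calc 2 * ⟪w, m⟫ / (8 * ε * (‖w‖ + ε)) * ‖x - x₀‖ ^ 2 = 2 * (t * ⟪w, m⟫) := by ring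
    _ ≤ ⟪x₀ - x, m⟫ := by rw [inner_sub_left]; linarith

theorem mul_norm_sub_le_of_quadratic_growth {K : Set E} {κ : ℝ} {m m' x₀ x : E}
    (hgrowth : ∀ y ∈ K, κ * ‖y - x₀‖ ^ 2 ≤ ⟪x₀ - y, m⟫) (hx₀ : x₀ ∈ K) (hx : x ∈ K)
    (hmax : IsMaxOn (fun y => ⟪y, m'⟫) K x) : κ * ‖x - x₀‖ ≤ ‖m' - m‖ := by
  have hvar : κ * ‖x - x₀‖ ^ 2 ≤ ⟪x - x₀, m' - m⟫ := by
    have h₁ := hgrowth x hx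
    have h₂ : ⟪x₀, m'⟫ ≤ ⟪x, m'⟫ := hmax hx₀
    simp only [inner_sub_left, inner_sub_right] at h₁ ⊢
    linarith
  rcases (norm_nonneg (x - x₀)).eq_or_lt with h₀ | hpos
  · rw [← h₀, mul_zero]
    exact norm_nonneg _
  · refine le_of_mul_le_mul_right ?_ hpos
    calc κ * ‖x - x₀‖ * ‖x - x₀‖ = κ * ‖x - x₀‖ ^ 2 := by ring
      _ ≤ ‖x - x₀‖ * ‖m' - m‖ := hvar.trans (real_inner_le_norm _ _)
      _ = ‖m' - m‖ * ‖x - x₀‖ := mul_comm _ _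

end QuadraticGrowth

namespace Matrix

variable {m n : Type*}

def flatten (A : Matrix m n ℝ) : EuclideanSpace ℝ (m × n) :=
  WithLp.toLp 2 fun p => A p.1 p.2

@[simp]
theorem flatten_apply (A : Matrix m n ℝ) (p : m × n) : A.flatten p = A p.1 p.2 := rfl

theorem flatten_sub (A B : Matrix m n ℝ) : (A - B).flatten = A.flatten - B.flatten := rfl

theorem flatten_of (x : EuclideanSpace ℝ (m × n)) : (Matrix.of fun i j => x (i, j)).flatten = x :=
  rfl

theorem inner_flatten [Fintype m] [Fintype n] (A B : Matrix m n ℝ) :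
    ⟪A.flatten, B.flatten⟫ = ∑ i, ∑ j, A i j * B i j := by
  simp [PiLp.inner_apply, Fintype.sum_prod_type, mul_comm]

end Matrix

theorem norm_flatten {n : ℕ} (A : Matrix (Fin n) (Fin n) ℝ) : ‖A.flatten‖ = frobNormR A := by
  simp [EuclideanSpace.norm_eq, frobNormR, Fintype.sum_prod_type]

section Constraint

variable {n : ℕ} {Ep : Set (Fin n × Fin n)} {lo hi : Fin n → Fin n → ℝ}

variable (Ep lo hi) in
def constraintSet : Set (EuclideanSpace ℝ (Fin n × Fin n)) :=
  {x | memH Ep lo hi (Matrix.of fun i j => x (i, j))}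

theorem flatten_mem_constraintSet_inter_closedBall {ε : ℝ} {Δ : Matrix (Fin n) (Fin n) ℝ}
    (hΔ : memH Ep lo hi Δ) (hΔε : frobNormR Δ ≤ ε) :
    Δ.flatten ∈ constraintSet Ep lo hi ∩ closedBall 0 ε :=
  ⟨hΔ, by rwa [mem_closedBall_zero_iff, norm_flatten]⟩

variable (Ep lo hi) in
theorem convex_constraintSet : Convex ℝ (constraintSet Ep lo hi) := by
  intro x hx y hy a b ha hb hab
  refine ⟨fun i j h => ?_, fun i j h => ?_⟩
  · have hx0 : x (i, j) = 0 := hx.1 i j h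
    have hy0 : y (i, j) = 0 := hy.1 i j h
    simp [hx0, hy0]
  · exact convex_Icc (lo i j) (hi i j) (hx.2 i j h) (hy.2 i j h) ha hb hab

theorem isMaxOn_inner_flatten {ε : ℝ} {M Δ₀ : Matrix (Fin n) (Fin n) ℝ}
    (hmax : ∀ Δ, memH Ep lo hi Δ → frobNormR Δ ≤ ε →
      ∑ i, ∑ j, Δ i j * M i j ≤ ∑ i, ∑ j, Δ₀ i j * M i j) :
    IsMaxOn (fun x => ⟪x, M.flatten⟫) (constraintSet Ep lo hi ∩ closedBall 0 ε) Δ₀.flatten := by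
  rintro x ⟨hxH, hxB⟩
  have hx := Matrix.flatten_of x
  rw [mem_closedBall_zero_iff, ← hx, norm_flatten] at hxB
  have h := hmax _ hxH hxB
  rw [← Matrix.inner_flatten, ← Matrix.inner_flatten, hx] at h
  exact h

theorem exists_add_mem_constraintSet_inner_pos {Δ M : Matrix (Fin n) (Fin n) ℝ}
    (hΔ : memH Ep lo hi Δ) {i j : Fin n} (hij : (i, j) ∈ Ep) (hlo : lo i j < Δ i j)
    (hhi : Δ i j < hi i j) (hM : M i j ≠ 0) :
    ∃ w, Δ.flatten + w ∈ constraintSet Ep lo hi ∧ 0 < ⟪w, M.flatten⟫ := by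
  classical
  set c := if 0 < M i j then hi i j - Δ i j else lo i j - Δ i j
  refine ⟨EuclideanSpace.single (i, j) c, ⟨fun k l hkl => ?_, fun k l hkl => ?_⟩, ?_⟩
  · have hne : (k, l) ≠ (i, j) := fun h => hkl (h ▸ hij)
    change Δ k l + EuclideanSpace.single (i, j) c (k, l) = 0
    rw [PiLp.single_apply, if_neg hne, add_zero]
    exact hΔ.1 k l hkl
  · change lo k l ≤ Δ k l + EuclideanSpace.single (i, j) c (k, l) ∧
      Δ k l + EuclideanSpace.single (i, j) c (k, l) ≤ hi k l
    rw [PiLp.single_apply]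
    split_ifs with h
    · obtain ⟨rfl, rfl⟩ := Prod.mk.inj h
      simp only [c]
      split_ifs <;> constructor <;> linarith
    · rw [add_zero]
      exact hΔ.2 k l hkl
  · rw [EuclideanSpace.inner_single_left, conj_trivial, Matrix.flatten_apply]
    simp only [c]
    split_ifs with hpos
    · exact mul_pos (by linarith) hpos
    · exact mul_pos_of_neg_of_neg (by linarith) (lt_of_le_of_ne (not_lt.1 hpos) hM)

end Constraint

theorem optimizer_lipschitz_in_objective_general {n : ℕ} (Ep : Set (Fin n × Fin n))
    (lo hi : Fin n → Fin n → ℝ)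
    (ε : ℝ) (hε : 0 < ε) (M : Matrix (Fin n) (Fin n) ℝ)
    (Δopt : Matrix (Fin n) (Fin n) ℝ)
    (hmem : memH Ep lo hi Δopt) (hball : frobNormR Δopt ≤ ε)
    (hmax : ∀ Δ, memH Ep lo hi Δ → frobNormR Δ ≤ ε →
      ∑ i, ∑ j, Δ i j * M i j ≤ ∑ i, ∑ j, Δopt i j * M i j)
    (hns : ∀ Δ', memH Ep lo hi Δ' → frobNormR Δ' ≤ ε →
      (∀ Δ, memH Ep lo hi Δ → frobNormR Δ ≤ ε →
        ∑ i, ∑ j, Δ i j * M i j ≤ ∑ i, ∑ j, Δ' i j * M i j) →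
      ∃ i j, (i, j) ∈ Ep ∧ lo i j < Δ' i j ∧ Δ' i j < hi i j ∧ M i j ≠ 0) :
    ∃ δ > 0, ∃ c > 0, ∀ Mt Δt : Matrix (Fin n) (Fin n) ℝ, frobNormR Mt ≤ 1 →
      memH Ep lo hi Δt → frobNormR Δt ≤ ε →
      (∀ Δ, memH Ep lo hi Δ → frobNormR Δ ≤ ε →
        ∑ i, ∑ j, Δ i j * Mt i j ≤ ∑ i, ∑ j, Δt i j * Mt i j) →
      frobNormR (Mt - M) ≤ δ →
      frobNormR (Δt - Δopt) ≤ c * ε * frobNormR (Mt - M) := by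
  obtain ⟨i, j, hij, hlo, hhi, hMij⟩ := hns Δopt hmem hball hmax
  have hopt := flatten_mem_constraintSet_inter_closedBall hmem hball
  obtain ⟨w, hw, hwM⟩ := exists_add_mem_constraintSet_inner_pos hmem hij hlo hhi hMij
  obtain ⟨κ, hκ, hgrowth⟩ := exists_quadratic_growth_of_isMaxOn (convex_constraintSet Ep lo hi) hε
    hopt (isMaxOn_inner_flatten hmax) hw hwM
  refine ⟨1, one_pos, (κ * ε)⁻¹, by positivity, fun Mt Δt _ hmemt hballt hmaxt _ => ?_⟩
  have h := mul_norm_sub_le_of_quadratic_growth hgrowth hopt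
    (flatten_mem_constraintSet_inter_closedBall hmemt hballt) (isMaxOn_inner_flatten hmaxt)
  rw [← Matrix.flatten_sub, ← Matrix.flatten_sub, norm_flatten, norm_flatten] at h
  calc frobNormR (Δt - Δopt) ≤ κ⁻¹ * frobNormR (Mt - M) := (le_inv_mul_iff₀ hκ).2 h
    _ = (κ * ε)⁻¹ * ε * frobNormR (Mt - M) := by field_simp

/-- local Lipschitz dependence of the optimizer on the objective
matrix. If `Δopt` maximizes `⟨Δ, M⟩` over `ℋ ∩ B_ε` with `‖M‖_F ≤ 1` and the
non-saturation assumption holds for `(Δopt, M)`, then there exist `δ, c > 0` such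
that for every `M̃` with `‖M̃‖_F ≤ 1` and every maximizer `Δ̃opt` of `⟨Δ, M̃⟩` over
`ℋ ∩ B_ε`, `‖M̃ − M‖_F ≤ δ` implies `‖Δ̃opt − Δopt‖_F ≤ c ε ‖M̃ − M‖_F`. -/
theorem optimizer_lipschitz_in_objective {n : ℕ} (Ep : Set (Fin n × Fin n))
    (lo hi : Fin n → Fin n → ℝ)
    (hbox : ∀ i j, (i, j) ∈ Ep → lo i j ≤ 0 ∧ 0 ≤ hi i j)
    (ε : ℝ) (hε : 0 < ε) (M : Matrix (Fin n) (Fin n) ℝ) (hM1 : frobNormR M ≤ 1)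
    (Δopt : Matrix (Fin n) (Fin n) ℝ)
    (hmem : memH Ep lo hi Δopt) (hball : frobNormR Δopt ≤ ε)
    (hmax : ∀ Δ, memH Ep lo hi Δ → frobNormR Δ ≤ ε →
      ∑ i, ∑ j, Δ i j * M i j ≤ ∑ i, ∑ j, Δopt i j * M i j)
    (hns : ∀ Δ', memH Ep lo hi Δ' → frobNormR Δ' ≤ ε →
      (∀ Δ, memH Ep lo hi Δ → frobNormR Δ ≤ ε →
        ∑ i, ∑ j, Δ i j * M i j ≤ ∑ i, ∑ j, Δ' i j * M i j) →
      ∃ i j, (i, j) ∈ Ep ∧ lo i j < Δ' i j ∧ Δ' i j < hi i j ∧ M i j ≠ 0) :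
    ∃ δ > 0, ∃ c > 0, ∀ Mt Δt : Matrix (Fin n) (Fin n) ℝ, frobNormR Mt ≤ 1 →
      memH Ep lo hi Δt → frobNormR Δt ≤ ε →
      (∀ Δ, memH Ep lo hi Δ → frobNormR Δ ≤ ε →
        ∑ i, ∑ j, Δ i j * Mt i j ≤ ∑ i, ∑ j, Δt i j * Mt i j) →
      frobNormR (Mt - M) ≤ δ →
      frobNormR (Δt - Δopt) ≤ c * ε * frobNormR (Mt - M) :=
  optimizer_lipschitz_in_objective_general Ep lo hi ε hε M Δopt hmem hball hmax hns
end
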